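/- Let G = 2^{P_f(Q)}, F = ⋃_n Lmax_n, and let Γ be a maximal consistent set in SLKVF. Let M_Γ = {C^{+Γ} : C finite ⊆ Q} ∪ {Γ_Kv}, where C^{+Γ} = {d : Kf(C,d) ∈ Γ} and Γ_Kv = {d : Kv(d) ∈ Γ}, and let g : P_f(Q) → M_Γ be any surjection. Define V_0, V_1 : Q → G by V_0(d)[C] = 0 if d ∈ g(C) and 1 otherwise, and V_1(d)[C] = V_0(d)[C] if g(C) ≠ Γ_Kv and V_1(d)[C] = 0 if g(C) = Γ_Kv. Then for all finite C ⊆ Q and d ∈ Q: if Kf(C,d) ∈ Γ, there exists f ∈ F with f(V_0(C)) = V_0(d) and f(V_1(C)) = V_1(d); and if Kf(C,d) ∉ Γ, then for all f ∈ F, f(V_0(C)) ≠ V_0(d). -/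

import Mathlib

open scoped Classical

/-! Single-agent language `LKVF` with operators `Kv`, `Kf` and `K`. -/

inductive Formula (P Q : Type) : Type where
  | top : Formula P Q
  | atom : P → Formula P Q
  | Kv : Q → Formula P Q
  | Kf : Finset Q → Q → Formula P Q
  | and : Formula P Q → Formula P Q → Formula P Q
  | not : Formula P Q → Formula P Q
  | K : Formula P Q → Formula P Q

namespace Formula

variable {P Q : Type}

/-- Material implication, defined from `and` and `not`. -/
def imp (φ ψ : Formula P Q) : Formula P Q := Formula.not (Formula.and φ (Formula.not ψ))

/-- Falsum. -/
def bot : Formula P Q := Formula.not Formula.top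

/-- Disjunction. -/
def or (φ ψ : Formula P Q) : Formula P Q :=
  Formula.not (Formula.and (Formula.not φ) (Formula.not ψ))

end Formula

variable {P Q G : Type}

/-- Finite conjunction of a list of formulas. -/
def conj : List (Formula P Q) → Formula P Q
  | [] => Formula.top
  | φ :: l => Formula.and φ (conj l)

/-- Finite disjunction of a list of formulas. -/
def disj : List (Formula P Q) → Formula P Q
  | [] => Formula.bot
  | φ :: l => Formula.or φ (disj l)

/-- `φ` is a propositional tautology: every Boolean valuation commuting with the
Boolean connectives makes it true. -/
def IsTaut (φ : Formula P Q) : Prop :=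
  ∀ v : Formula P Q → Bool,
    v Formula.top = true →
    (∀ α β, v (Formula.and α β) = (v α && v β)) →
    (∀ α, v (Formula.not α) = (! v α)) →
    v φ = true

section Axioms

variable (P Q : Type) [LinearOrder Q]

/-- `⋀_{d ∈ D} Kf(C,d)`. -/
def finConjKf (C D : Finset Q) : Formula P Q :=
  conj ((D.sort (· ≤ ·)).map fun d => Formula.Kf C d)

/-- `⋀_{c ∈ C} Kv(c)`. -/
def finConjKv (C : Finset Q) : Formula P Q :=
  conj ((C.sort (· ≤ ·)).map fun c => Formula.Kv c)

/-- The axioms of the base system `SLKVF`. -/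
inductive SLKVF : Formula P Q → Prop where
  | taut {φ : Formula P Q} : IsTaut φ → SLKVF φ
  | axK (φ ψ : Formula P Q) :
      SLKVF (Formula.imp (Formula.K (Formula.imp φ ψ))
        (Formula.imp (Formula.K φ) (Formula.K ψ)))
  | axT (φ : Formula P Q) : SLKVF (Formula.imp (Formula.K φ) φ)
  | ax4 (φ : Formula P Q) : SLKVF (Formula.imp (Formula.K φ) (Formula.K (Formula.K φ)))
  | ax5 (φ : Formula P Q) :
      SLKVF (Formula.imp (Formula.not (Formula.K φ)) (Formula.K (Formula.not (Formula.K φ))))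
  | kv4 (d : Q) : SLKVF (Formula.imp (Formula.Kv d) (Formula.K (Formula.Kv d)))
  | kv5 (d : Q) :
      SLKVF (Formula.imp (Formula.not (Formula.Kv d)) (Formula.K (Formula.not (Formula.Kv d))))
  | kf4 (C : Finset Q) (d : Q) :
      SLKVF (Formula.imp (Formula.Kf C d) (Formula.K (Formula.Kf C d)))
  | kf5 (C : Finset Q) (d : Q) :
      SLKVF (Formula.imp (Formula.not (Formula.Kf C d))
        (Formula.K (Formula.not (Formula.Kf C d))))
  | proj {C : Finset Q} {c : Q} : c ∈ C → SLKVF (Formula.Kf C c)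
  | tran (C D : Finset Q) (e : Q) :
      SLKVF (Formula.imp (Formula.and (finConjKf P Q C D) (Formula.Kf D e)) (Formula.Kf C e))
  | vf (C : Finset Q) (d : Q) :
      SLKVF (Formula.imp (Formula.and (finConjKv P Q C) (Formula.Kf C d)) (Formula.Kv d))

end Axioms

/-- Provability from an axiom set `Ax` with rules modus ponens and necessitation. -/
inductive Prov (Ax : Formula P Q → Prop) : Formula P Q → Prop where
  | ax {φ : Formula P Q} : Ax φ → Prov Ax φ
  | mp {φ ψ : Formula P Q} : Prov Ax (Formula.imp φ ψ) → Prov Ax φ → Prov Ax ψ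
  | nec {φ : Formula P Q} : Prov Ax φ → Prov Ax (Formula.K φ)

/-- `Γ` is consistent: no finite conjunction of its members proves `⊥`. -/
def Consistent (Ax : Formula P Q → Prop) (Γ : Set (Formula P Q)) : Prop :=
  ¬ ∃ L : List (Formula P Q), (∀ φ ∈ L, φ ∈ Γ) ∧ Prov Ax (Formula.imp (conj L) Formula.bot)

/-- `Γ` is maximal consistent. -/
def MCS (Ax : Formula P Q → Prop) (Γ : Set (Formula P Q)) : Prop :=
  Consistent Ax Γ ∧ ∀ φ : Formula P Q, φ ∈ Γ ∨ Formula.not φ ∈ Γ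

/-! Function domains: sets of finitary functions on the value domain `G`. -/

/-- A function domain on `G`: a set of `n`-ary functions on `G` for various `n`. -/
abbrev FnDom (G : Type) : Type := Set (Σ n : ℕ, (Fin n → G) → G)

/-- `F` contains all projection functions `id_{i,j}` for `0 < i ≤ j`. -/
def hasProjections (F : FnDom G) : Prop :=
  ∀ (j : ℕ) (k : Fin j), (⟨j, fun x => x k⟩ : Σ n : ℕ, (Fin n → G) → G) ∈ F

/-- `F` is closed under composition: for an `n`-ary `f ∈ F` with `n ≥ 1` and
`m`-ary `g₁, …, gₙ ∈ F`, the composition `f(g₁(·),…,gₙ(·))` is in `F`. -/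
def closedComp (F : FnDom G) : Prop :=
  ∀ (n m : ℕ), 0 < n → ∀ f : (Fin n → G) → G,
    (⟨n, f⟩ : Σ n : ℕ, (Fin n → G) → G) ∈ F →
    ∀ g : Fin n → (Fin m → G) → G,
      (∀ k, (⟨m, g k⟩ : Σ n : ℕ, (Fin n → G) → G) ∈ F) →
      (⟨m, fun x => f fun k => g k x⟩ : Σ n : ℕ, (Fin n → G) → G) ∈ F

/-- The tuple of values of the variables of the finite set `C`, in the fixed
(increasing) order of its elements. -/
def tupleV [LinearOrder Q] (v : Q → G) (C : Finset Q) : Fin C.card → G :=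
  fun k => v ((C.sort (· ≤ ·)).get (Fin.cast (Finset.length_sort (s := C) (· ≤ ·)).symm k))

/-- A model of `LKVF`: worlds, an assignment of propositional letters and an
assignment of values to variables. -/
structure Model (P Q G : Type) : Type 1 where
  W : Type
  U : W → P → Prop
  V : W → Q → G

variable [LinearOrder Q]

/-- Truth of a formula at a world of a model, relative to a function domain `F`. -/
def sat (F : FnDom G) (M : Model P Q G) (w : M.W) : Formula P Q → Prop
  | Formula.top => True
  | Formula.atom p => M.U w p
  | Formula.Kv d => ∃ x : G, ∀ w' : M.W, M.V w' d = x
  | Formula.Kf C d =>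
      ∃ f : (Fin C.card → G) → G,
        (⟨C.card, f⟩ : Σ n : ℕ, (Fin n → G) → G) ∈ F ∧
        ∀ w' : M.W, M.V w' d = f (tupleV (M.V w') C)
  | Formula.and φ ψ => sat F M w φ ∧ sat F M w ψ
  | Formula.not φ => ¬ sat F M w φ
  | Formula.K φ => ∀ w' : M.W, sat F M w' φ

/-- Validity over all models built on the value domain `G` and function domain `F`. -/
def Valid (F : FnDom G) (φ : Formula P Q) : Prop :=
  ∀ (M : Model P Q G) (w : M.W), sat F M w φ

/-! STATEMENT 12: the `Kf` clauses for the valuations `V₀`, `V₁` built from a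
maximal consistent set in `SLKVF`, over the intermediate function domain. -/

/-- The intermediate function domain `⋃ₙ Lmax_n` on `G = 2^{P_f(Q)}`. -/
def FLmax (Q : Type) : FnDom (Finset Q → Bool) :=
  {p : Σ n : ℕ, (Fin n → Finset Q → Bool) → Finset Q → Bool |
    ∀ (x : Fin p.1 → Finset Q → Bool) (C : Finset Q),
      p.2 x C = true → ∃ k : Fin p.1, x k C = true}

/-- `C^{+Γ} = {d : Kf(C,d) ∈ Γ}`. -/
def plusSet {P Q : Type} (Γ : Set (Formula P Q)) (C : Finset Q) : Set Q :=
  {d : Q | Formula.Kf C d ∈ Γ}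

/-- `Γ_Kv = {d : Kv(d) ∈ Γ}`. -/
def GKv {P Q : Type} (Γ : Set (Formula P Q)) : Set Q := {d : Q | Formula.Kv d ∈ Γ}

/-- `M_Γ = {C^{+Γ} : C finite ⊆ Q} ∪ {Γ_Kv}`. -/
def MGammaInt {P Q : Type} (Γ : Set (Formula P Q)) : Set (Set Q) :=
  {X : Set Q | ∃ C : Finset Q, X = plusSet Γ C} ∪ {GKv Γ}

/-- `V₀(d)[C] = 0` if `d ∈ g(C)`, else `1`. -/
noncomputable def V0 {P Q : Type} (Γ : Set (Formula P Q)) (g : Finset Q → Set Q)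
    (d : Q) : Finset Q → Bool :=
  fun C => if d ∈ g C then false else true

/-- `V₁(d)[C] = V₀(d)[C]` unless `g(C) = Γ_Kv`, in which case it is `0`. -/
noncomputable def V1 {P Q : Type} (Γ : Set (Formula P Q)) (g : Finset Q → Set Q)
    (d : Q) : Finset Q → Bool :=
  fun C => if g C = GKv Γ then false else V0 Γ g d C

/-!
If `Kf(C,d) ∈ Γ`, every member of `M_Γ` containing `C` also contains `d` (by TRAN for the sets
`D^{+Γ}` and by VF for `Γ_Kv`). Hence wherever `V₀(d)` is `1` some `V₀(c)`, `c ∈ C`, is `1`, and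
the same holds for `V₁`, which only zeroes the coordinates where `g` hits `Γ_Kv`; so
`x ↦ V₀(d) ∧ max x` is a function of `Lmax` sending both tuples to the right values.
Conversely, at a coordinate `B` with `g(B) = C^{+Γ}` all of `V₀(C)` vanishes by PROJ while `V₀(d)`
does not when `Kf(C,d) ∉ Γ`, which no function bounded by `max` can produce.
-/

namespace MCS

variable {P Q : Type} {Ax : Formula P Q → Prop} {Γ : Set (Formula P Q)}

theorem mem_of_prov (hΓ : MCS Ax Γ) (hAx : ∀ φ, IsTaut φ → Ax φ) {φ : Formula P Q}
    (h : Prov Ax φ) : φ ∈ Γ := by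
  refine (hΓ.2 φ).resolve_right fun hnφ => hΓ.1 ⟨[Formula.not φ], by simpa using hnφ, ?_⟩
  refine Prov.mp (Prov.ax (hAx _ fun v htop hand hnot => ?_)) h
  simp only [conj, Formula.imp, Formula.bot, hand, hnot, htop]
  cases v φ <;> rfl

theorem mem_of_imp_mem (hΓ : MCS Ax Γ) (hAx : ∀ φ, IsTaut φ → Ax φ) {φ ψ : Formula P Q}
    (himp : Formula.imp φ ψ ∈ Γ) (hφ : φ ∈ Γ) : ψ ∈ Γ := by
  refine (hΓ.2 ψ).resolve_right fun hnψ =>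
    hΓ.1 ⟨[Formula.imp φ ψ, φ, Formula.not ψ], ?_, Prov.ax (hAx _ fun v htop hand hnot => ?_)⟩
  · simp [himp, hφ, hnψ]
  · simp only [conj, Formula.imp, Formula.bot, hand, hnot, htop]
    cases v φ <;> cases v ψ <;> rfl

theorem and_mem (hΓ : MCS Ax Γ) (hAx : ∀ φ, IsTaut φ → Ax φ) {φ ψ : Formula P Q}
    (hφ : φ ∈ Γ) (hψ : ψ ∈ Γ) : Formula.and φ ψ ∈ Γ := by
  have hpair : Formula.imp φ (Formula.imp ψ (Formula.and φ ψ)) ∈ Γ :=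
    hΓ.mem_of_prov hAx <| Prov.ax <| hAx _ fun v _ hand hnot => by
      simp only [Formula.imp, hand, hnot]
      cases v φ <;> cases v ψ <;> rfl
  exact hΓ.mem_of_imp_mem hAx (hΓ.mem_of_imp_mem hAx hpair hφ) hψ

theorem conj_mem (hΓ : MCS Ax Γ) (hAx : ∀ φ, IsTaut φ → Ax φ) :
    ∀ L : List (Formula P Q), (∀ φ ∈ L, φ ∈ Γ) → conj L ∈ Γ
  | [], _ => hΓ.mem_of_prov hAx (Prov.ax (hAx _ fun _ htop _ _ => htop))
  | φ :: L, h => hΓ.and_mem hAx (h φ List.mem_cons_self)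
      (hΓ.conj_mem hAx L fun ψ hψ => h ψ (List.mem_cons_of_mem _ hψ))

end MCS

section Canonical

variable {P Q : Type} [LinearOrder Q] {Γ : Set (Formula P Q)}

theorem MCS.mem_of_SLKVF (hΓ : MCS (SLKVF P Q) Γ) {φ : Formula P Q} (h : SLKVF P Q φ) :
    φ ∈ Γ :=
  hΓ.mem_of_prov (fun _ => SLKVF.taut) (Prov.ax h)

theorem MCS.mem_of_SLKVF_and_imp (hΓ : MCS (SLKVF P Q) Γ) {φ ψ χ : Formula P Q}
    (h : SLKVF P Q (Formula.imp (Formula.and φ ψ) χ)) (hφ : φ ∈ Γ) (hψ : ψ ∈ Γ) : χ ∈ Γ :=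
  hΓ.mem_of_imp_mem (fun _ => SLKVF.taut) (hΓ.mem_of_SLKVF h)
    (hΓ.and_mem (fun _ => SLKVF.taut) hφ hψ)

theorem MCS.conj_sort_map_mem (hΓ : MCS (SLKVF P Q) Γ) {C : Finset Q} {f : Q → Formula P Q}
    (h : ∀ c ∈ C, f c ∈ Γ) : conj ((C.sort (· ≤ ·)).map f) ∈ Γ :=
  hΓ.conj_mem (fun _ => SLKVF.taut) _ <| by
    simpa only [List.forall_mem_map, Finset.mem_sort] using h

theorem subset_plusSet (hΓ : MCS (SLKVF P Q) Γ) (C : Finset Q) : ↑C ⊆ plusSet Γ C :=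
  fun _ hc => hΓ.mem_of_SLKVF (SLKVF.proj hc)

theorem mem_plusSet_of_Kf_mem (hΓ : MCS (SLKVF P Q) Γ) {C D : Finset Q} {d : Q}
    (hKf : Formula.Kf C d ∈ Γ) (hC : ↑C ⊆ plusSet Γ D) : d ∈ plusSet Γ D :=
  hΓ.mem_of_SLKVF_and_imp (SLKVF.tran D C d) (hΓ.conj_sort_map_mem fun _ hc => hC hc) hKf

theorem mem_GKv_of_Kf_mem (hΓ : MCS (SLKVF P Q) Γ) {C : Finset Q} {d : Q}
    (hKf : Formula.Kf C d ∈ Γ) (hC : ↑C ⊆ GKv Γ) : d ∈ GKv Γ :=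
  hΓ.mem_of_SLKVF_and_imp (SLKVF.vf C d) (hΓ.conj_sort_map_mem fun _ hc => hC hc) hKf

theorem mem_of_Kf_mem_of_mem_MGammaInt (hΓ : MCS (SLKVF P Q) Γ) {X : Set Q}
    (hX : X ∈ MGammaInt Γ) {C : Finset Q} {d : Q} (hKf : Formula.Kf C d ∈ Γ) (hC : ↑C ⊆ X) :
    d ∈ X := by
  rcases hX with ⟨D, rfl⟩ | rfl
  exacts [mem_plusSet_of_Kf_mem hΓ hKf hC, mem_GKv_of_Kf_mem hΓ hKf hC]

end Canonical

section Valuations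

variable {P Q : Type} {Γ : Set (Formula P Q)} {g : Finset Q → Set Q}

theorem V0_eq_true_iff {d : Q} {B : Finset Q} : V0 Γ g d B = true ↔ d ∉ g B := by
  simp [V0]

theorem V1_eq_true_iff {d : Q} {B : Finset Q} :
    V1 Γ g d B = true ↔ g B ≠ GKv Γ ∧ d ∉ g B := by
  simp [V1, V0]

end Valuations

section Lmax

variable {Q : Type}

def maskedMax {n : ℕ} (y : Finset Q → Bool) (x : Fin n → Finset Q → Bool) : Finset Q → Bool :=
  fun B => y B && decide (∃ k, x k B = true)

theorem maskedMax_mem_FLmax (n : ℕ) (y : Finset Q → Bool) :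
    (⟨n, maskedMax y⟩ : Σ n : ℕ, (Fin n → Finset Q → Bool) → Finset Q → Bool) ∈ FLmax Q :=
  fun _ _ h => (by simpa [maskedMax] using h : _ ∧ _).2

variable [LinearOrder Q]

theorem exists_tupleV_iff {G : Type} (v : Q → G) (C : Finset Q) (p : G → Prop) :
    (∃ k, p (tupleV v C k)) ↔ ∃ c ∈ C, p (v c) := by
  constructor
  · rintro ⟨k, hk⟩
    exact ⟨_, (Finset.mem_sort _).mp (List.get_mem _ _), hk⟩
  · rintro ⟨c, hc, hpc⟩
    obtain ⟨i, rfl⟩ := List.mem_iff_get.mp ((Finset.mem_sort (· ≤ ·)).mpr hc)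
    exact ⟨Fin.cast (Finset.length_sort (· ≤ ·)) i, hpc⟩

theorem maskedMax_tupleV_eq {y : Finset Q → Bool} {v : Q → Finset Q → Bool} {C : Finset Q}
    {d : Q} (h : ∀ B, v d B = true ↔ y B = true ∧ ∃ c ∈ C, v c B = true) :
    maskedMax y (tupleV v C) = v d := by
  funext B
  rw [Bool.eq_iff_iff, h, maskedMax, Bool.and_eq_true, decide_eq_true_eq,
    exists_tupleV_iff v C (· B = true)]

theorem exists_mem_of_mem_FLmax {C : Finset Q}
    {f : (Fin C.card → Finset Q → Bool) → Finset Q → Bool}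
    (hf : (⟨C.card, f⟩ : Σ n : ℕ, (Fin n → Finset Q → Bool) → Finset Q → Bool) ∈ FLmax Q)
    {v : Q → Finset Q → Bool} {B : Finset Q} (h : f (tupleV v C) B = true) :
    ∃ c ∈ C, v c B = true :=
  (exists_tupleV_iff v C (· B = true)).mp (hf _ B h)

end Lmax

theorem statement12_general (P Q : Type) [LinearOrder Q]
    (Γ : Set (Formula P Q)) (hΓ : MCS (SLKVF P Q) Γ)
    (g : Finset Q → Set Q)
    (hg1 : ∀ C : Finset Q, g C ∈ MGammaInt Γ)
    (hg2 : ∀ X ∈ MGammaInt Γ, ∃ C : Finset Q, g C = X) :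
    ∀ (C : Finset Q) (d : Q),
      (Formula.Kf C d ∈ Γ →
        ∃ f : (Fin C.card → Finset Q → Bool) → Finset Q → Bool,
          (⟨C.card, f⟩ : Σ n : ℕ, (Fin n → Finset Q → Bool) → Finset Q → Bool) ∈ FLmax Q ∧
          f (tupleV (V0 Γ g) C) = V0 Γ g d ∧ f (tupleV (V1 Γ g) C) = V1 Γ g d) ∧
      (Formula.Kf C d ∉ Γ →
        ∀ f : (Fin C.card → Finset Q → Bool) → Finset Q → Bool,
          (⟨C.card, f⟩ : Σ n : ℕ, (Fin n → Finset Q → Bool) → Finset Q → Bool) ∈ FLmax Q →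
            f (tupleV (V0 Γ g) C) ≠ V0 Γ g d) := by
  intro C d
  constructor
  · intro hKf
    have hcover : ∀ B, d ∉ g B → ∃ c ∈ C, c ∉ g B := fun B hd => by
      by_contra! hC
      exact hd (mem_of_Kf_mem_of_mem_MGammaInt hΓ (hg1 B) hKf hC)
    refine ⟨maskedMax (V0 Γ g d), maskedMax_mem_FLmax _ _,
      maskedMax_tupleV_eq fun B => ?_, maskedMax_tupleV_eq fun B => ?_⟩
    · simp only [V0_eq_true_iff]
      exact ⟨fun hd => ⟨hd, hcover B hd⟩, And.left⟩
    · simp only [V0_eq_true_iff, V1_eq_true_iff]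
      constructor
      · rintro ⟨hB, hd⟩
        obtain ⟨c, hc, hcB⟩ := hcover B hd
        exact ⟨hd, c, hc, hB, hcB⟩
      · rintro ⟨hd, c, -, hB, -⟩
        exact ⟨hB, hd⟩
  · intro hKf f hf hfd
    obtain ⟨B, hB⟩ := hg2 (plusSet Γ C) (Or.inl ⟨C, rfl⟩)
    have hdB : V0 Γ g d B = true := V0_eq_true_iff.mpr (hB ▸ hKf)
    obtain ⟨c, hc, hcB⟩ := exists_mem_of_mem_FLmax hf (hfd ▸ hdB)
    exact V0_eq_true_iff.mp hcB (hB ▸ subset_plusSet hΓ C hc)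

theorem statement12 (P Q : Type) [Countable P] [Infinite P] [LinearOrder Q]
    (Γ : Set (Formula P Q)) (hΓ : MCS (SLKVF P Q) Γ)
    (g : Finset Q → Set Q)
    (hg1 : ∀ C : Finset Q, g C ∈ MGammaInt Γ)
    (hg2 : ∀ X ∈ MGammaInt Γ, ∃ C : Finset Q, g C = X) :
    ∀ (C : Finset Q) (d : Q),
      (Formula.Kf C d ∈ Γ →
        ∃ f : (Fin C.card → Finset Q → Bool) → Finset Q → Bool,
          (⟨C.card, f⟩ : Σ n : ℕ, (Fin n → Finset Q → Bool) → Finset Q → Bool) ∈ FLmax Q ∧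
          f (tupleV (V0 Γ g) C) = V0 Γ g d ∧ f (tupleV (V1 Γ g) C) = V1 Γ g d) ∧
      (Formula.Kf C d ∉ Γ →
        ∀ f : (Fin C.card → Finset Q → Bool) → Finset Q → Bool,
          (⟨C.card, f⟩ : Σ n : ℕ, (Fin n → Finset Q → Bool) → Finset Q → Bool) ∈ FLmax Q →
            f (tupleV (V0 Γ g) C) ≠ V0 Γ g d) :=
  statement12_general P Q Γ hΓ g hg1 hg2
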